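/- Let Q = ℂ[s,t,u,x₁,x₂,y₁,y₂]/(s·x₁ + t·x₂, t·x₁ + u·x₂, s·u − t²), and let d_r, d_l : Q³ → Q³ be the Q-linear maps given by matrix-vector multiplication with the matrices d_r = [[0, y₁, y₂], [x₁, −u, t], [x₂, t, −s]] and d_l = [[0, s·y₁+t·y₂, t·y₁+u·y₂], [0, −x₂·y₂, x₁·y₂], [0, x₂·y₁, −x₁·y₁]]. Then the kernel of d_l equals the range of d_r plus the Q-span of the vector (1,0,0), and for q ∈ Q one has q·(1,0,0) ∈ range(d_r) if and only if q lies in the ideal of Q generated by x₁y₁, x₁y₂, x₂y₁, x₂y₂, t·y₁+u·y₂, s·y₁+t·y₂. Consequently ker(d_l)/range(d_r) is a cyclic Q-module isomorphic to Q/(x₁y₁, x₁y₂, x₂y₁, x₂y₂, t·y₁+u·y₂, s·y₁+t·y₂). -/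

import Mathlib

noncomputable section

open MvPolynomial

namespace Stmt10

/-- `ℂ[s,t,u,x₁,x₂,y₁,y₂]`, with variables `0 ↦ s, 1 ↦ t, 2 ↦ u, 3 ↦ x₁, 4 ↦ x₂, 5 ↦ y₁, 6 ↦ y₂`. -/
abbrev P7 : Type := MvPolynomial (Fin 7) ℂ

/-- The ideal `(s·x₁ + t·x₂, t·x₁ + u·x₂, s·u − t²)`. -/
def I : Ideal P7 :=
  Ideal.span {X 0 * X 3 + X 1 * X 4, X 1 * X 3 + X 2 * X 4, X 0 * X 2 - X 1 ^ 2}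

/-- `Q = ℂ[s,t,u,x₁,x₂,y₁,y₂]/(s·x₁ + t·x₂, t·x₁ + u·x₂, s·u − t²)`. -/
abbrev Q : Type := P7 ⧸ I

def s : Q := Ideal.Quotient.mk I (X 0)
def t : Q := Ideal.Quotient.mk I (X 1)
def u : Q := Ideal.Quotient.mk I (X 2)
def x₁ : Q := Ideal.Quotient.mk I (X 3)
def x₂ : Q := Ideal.Quotient.mk I (X 4)
def y₁ : Q := Ideal.Quotient.mk I (X 5)
def y₂ : Q := Ideal.Quotient.mk I (X 6)

/-- `d_r = [[0, y₁, y₂], [x₁, −u, t], [x₂, t, −s]]` acting by matrix-vector multiplication. -/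
def dr : (Fin 3 → Q) →ₗ[Q] (Fin 3 → Q) :=
  Matrix.mulVecLin !![0, y₁, y₂; x₁, -u, t; x₂, t, -s]

/-- `d_l = [[0, s·y₁+t·y₂, t·y₁+u·y₂], [0, −x₂·y₂, x₁·y₂], [0, x₂·y₁, −x₁·y₁]]`. -/
def dl : (Fin 3 → Q) →ₗ[Q] (Fin 3 → Q) :=
  Matrix.mulVecLin
    !![0, s * y₁ + t * y₂, t * y₁ + u * y₂; 0, -(x₂ * y₂), x₁ * y₂; 0, x₂ * y₁, -(x₁ * y₁)]

/-- The vector `(1,0,0) ∈ Q³`. -/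
def e₀ : Fin 3 → Q := ![1, 0, 0]

/-- The ideal `(x₁y₁, x₁y₂, x₂y₁, x₂y₂, t·y₁+u·y₂, s·y₁+t·y₂)` of `Q`. -/
def J : Ideal Q :=
  Ideal.span {x₁ * y₁, x₁ * y₂, x₂ * y₁, x₂ * y₂, t * y₁ + u * y₂, s * y₁ + t * y₂}

end Stmt10

/-!
Everything is lifted to `P7 = ℂ[s,t,u,x₁,x₂,y₁,y₂]`. Since no generator of `I` involves `y₁`,
multiplication by `y₁` is injective on `Q`, so the last row of `d_l v = 0` gives `x₂ v₁ = x₁ v₂`.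
Setting `x₁ = x₂ = 0` sends `I` into the principal ideal `(su - t²)` of a domain; together with
the coprimality of `x₁` and `x₂` this shows that, modulo `I`, the solutions of `x₂ v₁ = x₁ v₂` are
spanned by `(x₁, x₂)`, `(t, -s)` and `(u, -t)`, the lower parts of the columns of `d_r`. The same
specialisation computes the first coordinates of `range d_r ∩ Q e₀`, which is how `J` appears.
Then `ker d_l / range d_r` is generated by the class of `e₀`, whose annihilator is `J`.
-/

namespace MvPolynomial

variable {σ R : Type*} [CommRing R]

lemma exists_eq_of_X_mul_eq_X_mul [IsDomain R] {i j : σ} (hij : i ≠ j)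
    {a b : MvPolynomial σ R} (h : X i * a = X j * b) : ∃ c, a = X j * c ∧ b = X i * c := by
  obtain ⟨c, rfl⟩ : X j ∣ a :=
    ((X_prime (R := R)).dvd_or_dvd ⟨b, h⟩).resolve_left (by simpa [X_dvd_X] using hij.symm)
  exact ⟨c, rfl, mul_left_cancel₀ (X_ne_zero j) (by rw [← h]; ring)⟩

variable [DecidableEq σ]

noncomputable def killVars (s : Finset σ) : MvPolynomial σ R →ₐ[R] MvPolynomial σ R :=
  aeval fun j => if j ∈ s then 0 else X j

@[simp]
lemma killVars_X (s : Finset σ) (j : σ) :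
    killVars s (X j : MvPolynomial σ R) = if j ∈ s then 0 else X j := by
  simp [killVars]

lemma sub_killVars_mem_span (s : Finset σ) (p : MvPolynomial σ R) :
    p - killVars s p ∈ Ideal.span (X '' ↑s) := by
  set J : Ideal (MvPolynomial σ R) := Ideal.span (X '' ↑s)
  have h : Ideal.Quotient.mkₐ R J = (Ideal.Quotient.mkₐ R J).comp (killVars s) := by
    refine algHom_ext fun j => ?_
    by_cases hj : j ∈ s
    · simpa [hj, Ideal.Quotient.eq_zero_iff_mem] using
        (Ideal.subset_span ⟨j, hj, rfl⟩ : X j ∈ J)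
    · simp [hj]
  exact Ideal.Quotient.eq.mp congr($h p)

/-- `X i` is a nonzerodivisor modulo an ideal whose generators do not involve `X i`, because
every `w ∈ span S` satisfies `w - w(X i = 0) ∈ (X i) * span S`. -/
lemma mem_span_of_X_mul_mem [IsDomain R] {S : Set (MvPolynomial σ R)} {i : σ}
    (hS : ∀ f ∈ S, killVars {i} f = f) {p : MvPolynomial σ R}
    (hp : X i * p ∈ Ideal.span S) : p ∈ Ideal.span S := by
  have key : ∀ w ∈ Ideal.span S, w - killVars {i} w ∈ Ideal.span {X i} * Ideal.span S := by
    intro w hw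
    induction hw using Submodule.span_induction with
    | mem f hf => simp [hS f hf]
    | zero => simp
    | add a b _ _ ha hb => simpa [add_sub_add_comm] using add_mem ha hb
    | smul a w hw hw' =>
      have ha : a - killVars {i} a ∈ Ideal.span {X i} := by
        simpa using sub_killVars_mem_span {i} a
      have : a • w - killVars {i} (a • w)
          = (a - killVars {i} a) * w + killVars {i} a * (w - killVars {i} w) := by
        simp only [smul_eq_mul, map_mul]; ring
      rw [this]
      exact add_mem (Ideal.mul_mem_mul ha hw) (Ideal.mul_mem_left _ _ hw')
  obtain ⟨q, hq, hpq⟩ := Ideal.mem_span_singleton_mul.mp (by simpa using key _ hp)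
  rwa [mul_left_cancel₀ (X_ne_zero i) hpq] at hq

end MvPolynomial

namespace Submodule

variable {R M : Type*} [CommRing R] [AddCommGroup M] [Module R M]

lemma nonempty_quotient_equiv_of_eq_sup_span_singleton {K N : Submodule R M} {e : M}
    {J : Ideal R} (hK : K = N ⊔ R ∙ e) (hJ : ∀ q : R, q • e ∈ N ↔ q ∈ J) :
    Nonempty ((K ⧸ N.comap K.subtype) ≃ₗ[R] (R ⧸ J)) := by
  have he : e ∈ K := hK ▸ mem_sup_right (mem_span_singleton_self e)
  set ē := (N.comap K.subtype).mkQ ⟨e, he⟩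
  have htors : Ideal.torsionOf R _ ē = J := by
    ext q
    rw [Ideal.mem_torsionOf_iff, ← map_smul, mkQ_apply, Quotient.mk_eq_zero, mem_comap]
    exact hJ q
  have hspan : R ∙ ē = ⊤ := by
    refine eq_top_iff.mpr fun x _ => ?_
    obtain ⟨⟨w, hw⟩, rfl⟩ := mkQ_surjective _ x
    obtain ⟨n, hn, y, hy, rfl⟩ := mem_sup.mp (hK ▸ hw)
    obtain ⟨a, rfl⟩ := mem_span_singleton.mp hy
    refine mem_span_singleton.mpr ⟨a, ?_⟩
    rw [← map_smul, mkQ_apply, mkQ_apply, Quotient.eq, mem_comap]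
    simpa using N.neg_mem hn
  exact ⟨((quotEquivOfEq _ _ htors.symm).trans
    ((Ideal.quotTorsionOfEquivSpanSingleton R _ ē).trans (LinearEquiv.ofTop _ hspan))).symm⟩

end Submodule

namespace Stmt10

lemma det_ne_zero : (X 0 * X 2 - X 1 ^ 2 : P7) ≠ 0 := by
  intro h
  simpa using congrArg (eval ![1, 0, 1, 0, 0, 0, 0]) h

lemma exists_of_mem_I {w : P7} (h : w ∈ I) : ∃ a b c : P7,
    w = a * (X 0 * X 3 + X 1 * X 4) + b * (X 1 * X 3 + X 2 * X 4) + c * (X 0 * X 2 - X 1 ^ 2) := by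
  obtain ⟨a, w', hw', rfl⟩ := Ideal.mem_span_insert.mp h
  obtain ⟨b, c, rfl⟩ := Ideal.mem_span_pair.mp hw'
  exact ⟨a, b, c, by ring⟩

lemma exists_eq_killVars_add (p : P7) : ∃ a b : P7, p = killVars {3, 4} p + a * X 3 + b * X 4 := by
  have hp := sub_killVars_mem_span {3, 4} p
  simp only [Finset.coe_insert, Finset.coe_singleton, Set.image_insert_eq,
    Set.image_singleton] at hp
  obtain ⟨a, b, hab⟩ := Ideal.mem_span_pair.mp hp
  exact ⟨a, b, by linear_combination -hab⟩

lemma exists_of_X4_mul_sub_X3_mul_mem {V₁ V₂ : P7} (h : X 4 * V₁ - X 3 * V₂ ∈ I) :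
    ∃ a b c : P7, V₁ - (a * X 3 + b * X 1 + c * X 2) ∈ I ∧
      V₂ - (a * X 4 - b * X 0 - c * X 1) ∈ I := by
  set δ : P7 := X 0 * X 2 - X 1 ^ 2
  have hδ : δ ∈ I := Ideal.subset_span (by simp [δ])
  obtain ⟨p, q, r, hw⟩ := exists_of_mem_I h
  have hr : killVars {3, 4} r = 0 := by
    simpa [det_ne_zero] using congrArg (killVars {3, 4}) hw
  obtain ⟨r₁, r₂, hr'⟩ := exists_eq_killVars_add r
  rw [hr, zero_add] at hr'
  obtain ⟨a, ha, hb⟩ := exists_eq_of_X_mul_eq_X_mul (i := (4 : Fin 7)) (j := 3) (by decide)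
    (a := V₁ - p * X 1 - q * X 2 - r₂ * δ) (b := V₂ + p * X 0 + q * X 1 + r₁ * δ)
    (by linear_combination hw + δ * hr')
  refine ⟨a, p, q, ?_, ?_⟩
  · rw [show V₁ - (a * X 3 + p * X 1 + q * X 2) = r₂ * δ by linear_combination ha]
    exact I.mul_mem_left _ hδ
  · rw [show V₂ - (a * X 4 - p * X 0 - q * X 1) = -(r₁ * δ) by linear_combination hb]
    exact I.neg_mem (I.mul_mem_left _ hδ)

def JP : Ideal P7 :=
  Ideal.span {X 3 * X 5, X 3 * X 6, X 4 * X 5, X 4 * X 6, X 1 * X 5 + X 2 * X 6,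
    X 0 * X 5 + X 1 * X 6}

lemma map_JP : JP.map (Ideal.Quotient.mk I) = J := by
  simp only [JP, J, Ideal.map_span, Set.image_insert_eq, Set.image_singleton, map_add, map_mul]
  rfl

lemma X5_mul_add_X6_mul_mem_JP {C₀ C₁ C₂ : P7}
    (h₁ : X 3 * C₀ - X 2 * C₁ + X 1 * C₂ ∈ I) (h₂ : X 4 * C₀ + X 1 * C₁ - X 0 * C₂ ∈ I) :
    X 5 * C₁ + X 6 * C₂ ∈ JP := by
  obtain ⟨_, _, ρ₁, hρ₁⟩ := exists_of_mem_I h₁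
  obtain ⟨_, _, ρ₂, hρ₂⟩ := exists_of_mem_I h₂
  set c₁ := killVars {3, 4} C₁
  set c₂ := killVars {3, 4} C₂
  have k₁ : X 1 * c₂ - X 2 * c₁ = killVars {3, 4} ρ₁ * (X 0 * X 2 - X 1 ^ 2) := by
    simpa [c₁, c₂, sub_eq_neg_add] using congrArg (killVars {3, 4}) hρ₁
  have k₂ : X 1 * c₁ - X 0 * c₂ = killVars {3, 4} ρ₂ * (X 0 * X 2 - X 1 ^ 2) := by
    simpa [c₁, c₂] using congrArg (killVars {3, 4}) hρ₂
  have hc₁ : c₁ = -(X 0 * killVars {3, 4} ρ₁ + X 1 * killVars {3, 4} ρ₂) :=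
    mul_left_cancel₀ det_ne_zero (by linear_combination -X 0 * k₁ - X 1 * k₂)
  have hc₂ : c₂ = -(X 1 * killVars {3, 4} ρ₁ + X 2 * killVars {3, 4} ρ₂) :=
    mul_left_cancel₀ det_ne_zero (by linear_combination -X 1 * k₁ - X 2 * k₂)
  obtain ⟨a₁, b₁, hC₁⟩ := exists_eq_killVars_add C₁
  obtain ⟨a₂, b₂, hC₂⟩ := exists_eq_killVars_add C₂
  rw [show X 5 * C₁ + X 6 * C₂ = a₁ * (X 3 * X 5) + a₂ * (X 3 * X 6) + b₁ * (X 4 * X 5)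
      + b₂ * (X 4 * X 6) - killVars {3, 4} ρ₂ * (X 1 * X 5 + X 2 * X 6)
      - killVars {3, 4} ρ₁ * (X 0 * X 5 + X 1 * X 6) by
    linear_combination X 5 * hC₁ + X 6 * hC₂ + X 5 * hc₁ + X 6 * hc₂]
  refine sub_mem (sub_mem (add_mem (add_mem (add_mem ?_ ?_) ?_) ?_) ?_) ?_ <;>
    exact Ideal.mul_mem_left _ _ (Ideal.subset_span (by simp))

lemma eq_zero_of_y₁_mul_eq_zero {a : Q} (h : y₁ * a = 0) : a = 0 := by
  obtain ⟨A, rfl⟩ := Ideal.Quotient.mk_surjective a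
  have hA : X 5 * A ∈ I := Ideal.Quotient.eq_zero_iff_mem.mp h
  exact Ideal.Quotient.eq_zero_iff_mem.mpr (mem_span_of_X_mul_mem (by simp) hA)

lemma rel₁ : s * x₁ + t * x₂ = 0 :=
  Ideal.Quotient.eq_zero_iff_mem.mpr (Ideal.subset_span (by simp))

lemma rel₂ : t * x₁ + u * x₂ = 0 :=
  Ideal.Quotient.eq_zero_iff_mem.mpr (Ideal.subset_span (by simp))

lemma rel₃ : s * u - t ^ 2 = 0 :=
  Ideal.Quotient.eq_zero_iff_mem.mpr (Ideal.subset_span (by simp))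

lemma exists_of_x₂_mul_eq_x₁_mul {v₁ v₂ : Q} (h : x₂ * v₁ = x₁ * v₂) :
    ∃ a b c : Q, v₁ = a * x₁ + b * t + c * u ∧ v₂ = a * x₂ - b * s - c * t := by
  obtain ⟨V₁, rfl⟩ := Ideal.Quotient.mk_surjective v₁
  obtain ⟨V₂, rfl⟩ := Ideal.Quotient.mk_surjective v₂
  obtain ⟨a, b, c, h₁, h₂⟩ := exists_of_X4_mul_sub_X3_mul_mem (Ideal.Quotient.eq.mp h)
  exact ⟨Ideal.Quotient.mk I a, Ideal.Quotient.mk I b, Ideal.Quotient.mk I c,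
    Ideal.Quotient.eq.mpr h₁, Ideal.Quotient.eq.mpr h₂⟩

lemma y₁_mul_add_y₂_mul_mem_J {c₀ c₁ c₂ : Q} (h₁ : x₁ * c₀ - u * c₁ + t * c₂ = 0)
    (h₂ : x₂ * c₀ + t * c₁ - s * c₂ = 0) : y₁ * c₁ + y₂ * c₂ ∈ J := by
  obtain ⟨C₀, rfl⟩ := Ideal.Quotient.mk_surjective c₀
  obtain ⟨C₁, rfl⟩ := Ideal.Quotient.mk_surjective c₁
  obtain ⟨C₂, rfl⟩ := Ideal.Quotient.mk_surjective c₂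
  rw [← map_JP]
  exact Ideal.mem_map_of_mem _ (X5_mul_add_X6_mul_mem_JP
    (Ideal.Quotient.eq_zero_iff_mem.mp h₁) (Ideal.Quotient.eq_zero_iff_mem.mp h₂))

lemma dr_apply (c : Fin 3 → Q) : dr c =
    ![y₁ * c 1 + y₂ * c 2, x₁ * c 0 - u * c 1 + t * c 2, x₂ * c 0 + t * c 1 - s * c 2] := by
  ext i
  fin_cases i <;>
    simp only [dr, Matrix.mulVecLin_apply, Matrix.mulVec, dotProduct, Fin.sum_univ_three,
      Matrix.of_apply, Fin.reduceFinMk, Matrix.cons_val] <;>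
    ring

lemma dl_apply (v : Fin 3 → Q) : dl v =
    ![(s * y₁ + t * y₂) * v 1 + (t * y₁ + u * y₂) * v 2,
      -(x₂ * y₂) * v 1 + x₁ * y₂ * v 2, x₂ * y₁ * v 1 - x₁ * y₁ * v 2] := by
  ext i
  fin_cases i <;>
    simp only [dl, Matrix.mulVecLin_apply, Matrix.mulVec, dotProduct, Fin.sum_univ_three,
      Matrix.of_apply, Fin.reduceFinMk, Matrix.cons_val] <;>
    ring

lemma dl_dr (c : Fin 3 → Q) : dl (dr c) = 0 := by
  ext i
  fin_cases i <;> simp only [dl_apply, dr_apply, Fin.reduceFinMk, Matrix.cons_val, Pi.zero_apply]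
  · linear_combination (y₁ * c 0) * rel₁ + (y₂ * c 0) * rel₂ - (y₁ * c 1 + y₂ * c 2) * rel₃
  · linear_combination (y₂ * c 1) * rel₂ - (y₂ * c 2) * rel₁
  · linear_combination (y₁ * c 2) * rel₁ - (y₁ * c 1) * rel₂

lemma dl_e₀ : dl e₀ = 0 := by
  ext i
  fin_cases i <;> simp [dl_apply, e₀]

lemma dr_eq_smul_e₀_iff {c : Fin 3 → Q} {q : Q} : dr c = q • e₀ ↔
    y₁ * c 1 + y₂ * c 2 = q ∧ x₁ * c 0 - u * c 1 + t * c 2 = 0 ∧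
      x₂ * c 0 + t * c 1 - s * c 2 = 0 := by
  simp [dr_apply, e₀, funext_iff, Fin.forall_fin_succ]

lemma ker_dl : LinearMap.ker dl = LinearMap.range dr ⊔ Q ∙ e₀ := by
  refine le_antisymm (fun v hv => ?_) (sup_le ?_ ?_)
  · have h : x₂ * y₁ * v 1 - x₁ * y₁ * v 2 = 0 := by
      simpa [dl_apply] using congrFun (LinearMap.mem_ker.mp hv) 2
    have h' : x₂ * v 1 = x₁ * v 2 :=
      sub_eq_zero.mp (eq_zero_of_y₁_mul_eq_zero (by linear_combination h))
    obtain ⟨a, b, c, h₁, h₂⟩ := exists_of_x₂_mul_eq_x₁_mul h'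
    refine Submodule.mem_sup.mpr ⟨dr ![a, -c, b], ⟨_, rfl⟩, (v 0 - y₂ * b + y₁ * c) • e₀,
      Submodule.smul_mem _ _ (Submodule.mem_span_singleton_self e₀), ?_⟩
    ext i
    fin_cases i <;> simp only [dr_apply, e₀, Fin.reduceFinMk, Matrix.cons_val, Pi.add_apply,
      Pi.smul_apply, smul_eq_mul, mul_one, mul_zero, add_zero]
    · ring
    · linear_combination -h₁
    · linear_combination -h₂
  · rintro _ ⟨c, rfl⟩
    exact dl_dr c
  · exact (Submodule.span_singleton_le_iff_mem _ _).mpr dl_e₀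

lemma smul_e₀_mem_range_dr_iff (q : Q) : q • e₀ ∈ LinearMap.range dr ↔ q ∈ J := by
  refine ⟨fun ⟨c, hc⟩ => ?_, fun hq => ?_⟩
  · obtain ⟨rfl, h₁, h₂⟩ := dr_eq_smul_e₀_iff.mp hc
    exact y₁_mul_add_y₂_mul_mem_J h₁ h₂
  · suffices J ≤ (LinearMap.range dr).comap (LinearMap.toSpanSingleton Q _ e₀) from this hq
    refine Ideal.span_le.mpr ?_
    simp only [Set.insert_subset_iff, Set.singleton_subset_iff, SetLike.mem_coe,
      Submodule.mem_comap, LinearMap.toSpanSingleton_apply]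
    refine ⟨⟨![u, x₁, 0], ?_⟩, ⟨![-t, 0, x₁], ?_⟩, ⟨![-t, x₂, 0], ?_⟩, ⟨![s, 0, x₂], ?_⟩,
      ⟨![0, t, u], ?_⟩, ⟨![0, s, t], ?_⟩⟩ <;>
      simp only [dr_eq_smul_e₀_iff, Matrix.cons_val, mul_zero, add_zero, zero_add, sub_zero,
        zero_sub]
    · exact ⟨mul_comm _ _, by ring, by linear_combination rel₂⟩
    · exact ⟨mul_comm _ _, by ring, by linear_combination -rel₁⟩
    · exact ⟨mul_comm _ _, by linear_combination -rel₂, by ring⟩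
    · exact ⟨mul_comm _ _, by linear_combination rel₁, by ring⟩
    · exact ⟨by ring, by ring, by linear_combination -rel₃⟩
    · exact ⟨by ring, by linear_combination -rel₃, by ring⟩

/-- `ker d_l = range d_r + Q·(1,0,0)`; moreover `q·(1,0,0) ∈ range d_r` iff `q ∈ J`,
and consequently `ker d_l / range d_r ≅ Q/J` as `Q`-modules. -/
theorem stmt_10 :
    LinearMap.ker dl = LinearMap.range dr ⊔ Submodule.span Q {e₀} ∧
    (∀ q : Q, q • e₀ ∈ LinearMap.range dr ↔ q ∈ J) ∧
    Nonempty ((↥(LinearMap.ker dl) ⧸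
        (LinearMap.range dr).comap (LinearMap.ker dl).subtype) ≃ₗ[Q] (Q ⧸ J)) :=
  ⟨ker_dl, smul_e₀_mem_range_dr_iff,
    Submodule.nonempty_quotient_equiv_of_eq_sup_span_singleton ker_dl smul_e₀_mem_range_dr_iff⟩

end Stmt10
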